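/- arXiv:1204.5498 — 3 statements merged into one kernel-verified Lean document; each statement's English description precedes it below -/
import Mathlib

section
/- For the explicit map ι sending ±(a b; c d) in PSL(2,C) to the given 4×4 real matrix with entries such as |a|^2+|d|^2-|b|^2-|c|^2 in position (1,1) and |a|^2+|b|^2+|c|^2+|d|^2 in position (4,4), the image ι(g) preserves the quadratic form x^2+y^2+z^2-w^2 for every g in SL(2,C) with det g = 1. -/
open Complex Matrix
open ComplexConjugate

/-- The explicit map `ι` from `SL(2,ℂ)` (given by entries `a b c d`) to 4×4 real
matrices, every entry divided by 2. -/
noncomputable def iotaMap (a b c d : ℂ) : Matrix (Fin 4) (Fin 4) ℝ :=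
  (1/2 : ℝ) • Matrix.of
    ![![ normSq a + normSq d - normSq b - normSq c,
         (b * conj a + a * conj b - d * conj c - c * conj d).re,
         (I * (b * conj a - a * conj b - d * conj c + c * conj d)).re,
         normSq a + normSq b - normSq c - normSq d ],
      ![ (c * conj a - d * conj b + a * conj c - b * conj d).re,
         (d * conj a + c * conj b + b * conj c + a * conj d).re,
         (I * (d * conj a - c * conj b + b * conj c - a * conj d)).re,
         (c * conj a + d * conj b + a * conj c + b * conj d).re ],
      ![ (I * (-c * conj a + d * conj b + a * conj c - b * conj d)).re,
         (I * (-d * conj a - c * conj b + b * conj c + a * conj d)).re,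
         (d * conj a - c * conj b - b * conj c + a * conj d).re,
         (I * (-c * conj a - d * conj b + a * conj c + b * conj d)).re ],
      ![ normSq a + normSq c - normSq b - normSq d,
         (b * conj a + a * conj b + d * conj c + c * conj d).re,
         (I * (b * conj a - a * conj b + d * conj c - c * conj d)).re,
         normSq a + normSq b + normSq c + normSq d ]]

/-- The Lorentz form `x² + y² + z² - w²` on `ℝ⁴`. -/
noncomputable def lorentzForm (v : Fin 4 → ℝ) : ℝ :=
  (v 0)^2 + (v 1)^2 + (v 2)^2 - (v 3)^2

/-- For every `g ∈ SL(2,ℂ)`, the image `ι(g)` preserves `x² + y² + z² - w²`. -/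
theorem iotaMap_preserves_lorentz (a b c d : ℂ) (h : a * d - b * c = 1) :
    ∀ v : Fin 4 → ℝ, lorentzForm ((iotaMap a b c d).mulVec v) = lorentzForm v := by

  intro v
  have h1 : a.re * d.re - a.im * d.im - (b.re * c.re - b.im * c.im) = 1 := by
    have := congrArg Complex.re h
    simpa [Complex.mul_re] using this
  have h2 : a.re * d.im + a.im * d.re - (b.re * c.im + b.im * c.re) = 0 := by
    have := congrArg Complex.im h
    simpa [Complex.mul_im] using this
  simp only [iotaMap, lorentzForm, Matrix.mulVec, dotProduct, Fin.sum_univ_four,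
    Matrix.smul_apply, Matrix.of_apply, Matrix.cons_val', Matrix.cons_val_zero,
    Matrix.cons_val_one, Matrix.head_cons, Matrix.empty_val', Matrix.cons_val_fin_one,
    Matrix.head_fin_const, Matrix.cons_val_two, Matrix.tail_cons, Matrix.cons_val_three,
    Complex.normSq_apply, Complex.mul_re, Complex.mul_im, Complex.conj_re, Complex.conj_im,
    Complex.I_re, Complex.I_im, Complex.add_re, Complex.add_im, Complex.sub_re,
    Complex.sub_im, Complex.neg_re, Complex.neg_im, smul_eq_mul]
  set R := a.re * d.re - a.im * d.im - (b.re * c.re - b.im * c.im) with hR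
  set S := a.re * d.im + a.im * d.re - (b.re * c.im + b.im * c.re) with hS
  linear_combination (((v 0)^2 + (v 1)^2 + (v 2)^2 - (v 3)^2) * (R + 1)) * h1 +
    (((v 0)^2 + (v 1)^2 + (v 2)^2 - (v 3)^2) * S) * h2
end

section
/- Integrating the main term of the matrix coefficient against the Haar measure sinh^2 t dt on A^+: for 1 < s < 2 and T > 1, ∫_0^{2 log T} ( sinh((s-1)t)/((s-1) sinh t) ) · sinh^2 t dt = T^{2s}/(4s(s-1)) + O(T^2 + T^{2(2-s)}). -/
open Real MeasureTheory intervalIntegral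

lemma int_cosh_mul (c : ℝ) (hc : c ≠ 0) (b : ℝ) :
    ∫ t in (0:ℝ)..b, Real.cosh (c * t) = Real.sinh (c * b) / c := by
  have hderiv : ∀ x ∈ Set.uIcc (0:ℝ) b,
      HasDerivAt (fun t => Real.sinh (c * t) / c) (Real.cosh (c * x)) x := by
    intro x _
    have h := ((Real.hasDerivAt_sinh (c * x)).comp x
      ((hasDerivAt_id x).const_mul c)).div_const c
    simpa [mul_comm, mul_div_assoc, mul_div_cancel_left₀ _ hc] using h
  have hcont : IntervalIntegrable (fun t => Real.cosh (c * t)) volume 0 b :=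
    (Real.continuous_cosh.comp (continuous_const.mul continuous_id)).intervalIntegrable _ _
  have := intervalIntegral.integral_eq_sub_of_hasDerivAt hderiv hcont
  simpa using this

/-- Integrating the spherical matrix coefficient against the Haar measure
`sinh² t dt` on `A⁺`: for `1 < s < 2` there is a constant `C` (depending only
on `s`) such that for all `T > 1`,
`∫_0^{2 log T} (sinh((s-1)t)/((s-1) sinh t))·sinh² t dt
   = T^{2s}/(4s(s-1)) + O(T² + T^{2(2-s)})`. -/
theorem integrated_matrix_coefficient (s : ℝ) (hs : 1 < s) (hs' : s < 2) :
    ∃ C : ℝ, 0 < C ∧ ∀ T : ℝ, 1 < T →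
      |(∫ t in (0 : ℝ)..(2 * Real.log T),
          (Real.sinh ((s - 1) * t) / ((s - 1) * Real.sinh t)) * Real.sinh t ^ 2)
        - T ^ (2 * s) / (4 * s * (s - 1))|
        ≤ C * (T ^ 2 + T ^ (2 * (2 - s))) := by
  have h1 : (0:ℝ) < s - 1 := by linarith
  have h2 : (0:ℝ) < 2 - s := by linarith
  have hs0 : (0:ℝ) < s := by linarith
  have hsne : s ≠ 0 := ne_of_gt hs0
  have hs2ne : s - 2 ≠ 0 := by intro h; rw [sub_eq_zero] at h; linarith
  have hs1ne : s - 1 ≠ 0 := ne_of_gt h1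
  have hc1pos : (0:ℝ) < 4 * s * (s - 1) := by nlinarith
  have hc2pos : (0:ℝ) < 4 * (2 - s) * (s - 1) := by nlinarith
  refine ⟨1/(4*s*(s-1)) + 1/(4*(2-s)*(s-1)), by positivity, ?_⟩
  intro T hT
  have hT0 : (0:ℝ) < T := by linarith
  set L := 2 * Real.log T with hLdef
  have hcong : (∫ t in (0:ℝ)..L,
      (Real.sinh ((s - 1) * t) / ((s - 1) * Real.sinh t)) * Real.sinh t ^ 2)
      = ∫ t in (0:ℝ)..L, (Real.cosh (s*t) - Real.cosh ((s-2)*t)) / (2*(s-1)) := by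
    apply intervalIntegral.integral_congr
    intro t _
    dsimp only
    by_cases h : t = 0
    · simp [h]
    · have hst : Real.sinh t ≠ 0 := fun hz => h (Real.sinh_injective (by simpa using hz))
      have e1 : s * t = (s-1)*t + t := by ring
      have e2 : (s-2) * t = (s-1)*t - t := by ring
      rw [e1, e2, Real.cosh_add, Real.cosh_sub]
      field_simp
      ring
  rw [hcong]
  have hint1 : IntervalIntegrable (fun t => Real.cosh (s*t)) volume 0 L :=
    (Real.continuous_cosh.comp (continuous_const.mul continuous_id)).intervalIntegrable _ _
  have hint2 : IntervalIntegrable (fun t => Real.cosh ((s-2)*t)) volume 0 L :=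
    (Real.continuous_cosh.comp (continuous_const.mul continuous_id)).intervalIntegrable _ _
  have hval : (∫ t in (0:ℝ)..L, (Real.cosh (s*t) - Real.cosh ((s-2)*t)) / (2*(s-1)))
      = (Real.sinh (s*L)/s - Real.sinh ((s-2)*L)/(s-2)) / (2*(s-1)) := by
    simp_rw [div_eq_mul_inv]
    rw [intervalIntegral.integral_mul_const, intervalIntegral.integral_sub hint1 hint2,
      int_cosh_mul s hsne L, int_cosh_mul (s-2) hs2ne L]
    simp [div_eq_mul_inv]
  rw [hval]
  have hexp : ∀ x : ℝ, Real.exp (x * L) = T ^ (2*x) := by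
    intro x
    rw [Real.rpow_def_of_pos hT0]
    congr 1
    rw [hLdef]; ring
  have hsinh1 : Real.sinh (s*L) = (T ^ (2*s) - T ^ (2*(-s))) / 2 := by
    have e : -(s*L) = (-s)*L := by ring
    rw [Real.sinh_eq, e, hexp s, hexp (-s)]
  have hsinh2 : Real.sinh ((s-2)*L) = (T ^ (2*(s-2)) - T ^ (2*(2-s))) / 2 := by
    have e : -((s-2)*L) = (2-s)*L := by ring
    rw [Real.sinh_eq, e, hexp (s-2), hexp (2-s)]
  rw [hsinh1, hsinh2]
  set A := T ^ (2*s) with hA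
  set B := T ^ (2*(-s)) with hB
  set C1 := T ^ (2*(s-2)) with hC1
  set D := T ^ (2*(2-s)) with hD
  have hB1 : B ≤ 1 := Real.rpow_le_one_of_one_le_of_nonpos (le_of_lt hT) (by nlinarith)
  have hC10 : 0 ≤ C1 := Real.rpow_nonneg (le_of_lt hT0) _
  have hD0 : 0 ≤ D := Real.rpow_nonneg (le_of_lt hT0) _
  have hB0 : 0 ≤ B := Real.rpow_nonneg (le_of_lt hT0) _
  have hT2 : (1:ℝ) ≤ T ^ 2 := by nlinarith
  have herr : ((A - B)/2/s - (C1 - D)/2/(s-2)) / (2*(s-1)) - A / (4*s*(s-1))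
      = -(B/(4*s*(s-1)) + (D - C1)/(4*(2-s)*(s-1))) := by
    field_simp
    ring
  rw [herr, abs_neg]
  have hDC : 0 ≤ D - C1 := by
    have : C1 ≤ D := Real.rpow_le_rpow_of_exponent_le (le_of_lt hT) (by nlinarith)
    linarith
  rw [abs_of_nonneg (by positivity)]
  have key1 : B/(4*s*(s-1)) ≤ T^2/(4*s*(s-1)) :=
    (div_le_div_iff_of_pos_right hc1pos).mpr (hB1.trans hT2)
  have key2 : (D - C1)/(4*(2-s)*(s-1)) ≤ D/(4*(2-s)*(s-1)) :=
    (div_le_div_iff_of_pos_right hc2pos).mpr (by linarith)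
  have hexpand : (1/(4*s*(s-1)) + 1/(4*(2-s)*(s-1))) * (T^2 + D)
      = T^2/(4*s*(s-1)) + D/(4*s*(s-1)) + T^2/(4*(2-s)*(s-1)) + D/(4*(2-s)*(s-1)) := by
    field_simp
    ring
  have hp1 : 0 ≤ D/(4*s*(s-1)) := div_nonneg hD0 hc1pos.le
  have hp2 : 0 ≤ T^2/(4*(2-s)*(s-1)) := div_nonneg (by positivity) hc2pos.le
  linarith [add_le_add key1 key2]
end

section
/- Derivative of the Poisson kernel under the jumping direction: let P(x_1+ix_2+jy; z) = y(1+|z|^2)/(|z-(x_1+ix_2)|^2 + y^2) be the Poisson kernel of H^3 at boundary point z ∈ C, and let δ > 0. Then for the point j (x_1=x_2=0, y=1) and boundary point z = e^{iφ} tan(θ/2) corresponding to Euler angles (φ,θ), the derivative of P^δ at j in the direction of J^+ equals -δ sin θ e^{iφ}. -/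
open Complex Real

/-- The Poisson kernel of `ℍ³` at the point `x₁ + i x₂ + j y` and boundary
point `z ∈ ℂ`: `P = y(1+|z|²)/(|z-(x₁+ix₂)|² + y²)`. -/
noncomputable def poissonKernelH3 (x₁ x₂ y : ℝ) (z : ℂ) : ℝ :=
  y * (1 + Complex.normSq z) / (Complex.normSq (z - (x₁ + x₂ * Complex.I)) + y ^ 2)

/-! Along each of the two real flows the kernel at `j` equals `1` at `ε = 0` and is the
reciprocal of a shifted quadratic, so `(P^δ)'(0) = δ P'(0)` with `P'(0) = -2 Re z / (1 + |z|²)`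
resp. `-2 Im z / (1 + |z|²)`. The complexified derivative is therefore `-2δ z / (1 + |z|²)`,
and for `z = e^{iφ} tan(θ/2)` the tangent half-angle formula
`sin θ = 2 tan(θ/2) / (1 + tan²(θ/2))` turns this into `-δ sin θ e^{iφ}`. -/

theorem HasDerivAt.rpow_const_of_eq_one {f : ℝ → ℝ} {f' x : ℝ} (δ : ℝ)
    (hf : HasDerivAt f f' x) (hfx : f x = 1) :
    HasDerivAt (fun t => f t ^ δ) (δ * f') x := by
  simpa [hfx, mul_comm] using hf.rpow_const (p := δ) (Or.inl (by simp [hfx]))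

theorem hasDerivAt_div_add_sq_add (c d : ℝ) (hd : 0 < d) :
    HasDerivAt (fun ε : ℝ => (c ^ 2 + d) / ((c + ε) ^ 2 + d)) (-2 * c / (c ^ 2 + d)) 0 := by
  have hpos : 0 < c ^ 2 + d := by positivity
  have hden : HasDerivAt (fun ε : ℝ => (c + ε) ^ 2 + d) (2 * c) 0 := by
    simpa using (((hasDerivAt_id (0 : ℝ)).const_add c).pow 2).add_const d
  refine ((hasDerivAt_const (0 : ℝ) (c ^ 2 + d)).div hden
    (by simpa using hpos.ne')).congr_deriv ?_
  field_simp
  ring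

theorem poissonKernelH3_neg_zero_one (z : ℂ) (ε : ℝ) :
    poissonKernelH3 (-ε) 0 1 z
      = (z.re ^ 2 + (z.im ^ 2 + 1)) / ((z.re + ε) ^ 2 + (z.im ^ 2 + 1)) := by
  have hdiff : z - ((-ε : ℝ) + (0 : ℝ) * I) = ⟨z.re + ε, z.im⟩ := by
    apply Complex.ext <;> simp
  rw [poissonKernelH3, hdiff, normSq_mk, normSq_apply]
  ring

theorem poissonKernelH3_zero_neg_one (z : ℂ) (ε : ℝ) :
    poissonKernelH3 0 (-ε) 1 z
      = (z.im ^ 2 + (z.re ^ 2 + 1)) / ((z.im + ε) ^ 2 + (z.re ^ 2 + 1)) := by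
  have hdiff : z - ((0 : ℝ) + (-ε : ℝ) * I) = ⟨z.re, z.im + ε⟩ := by
    apply Complex.ext <;> simp
  rw [poissonKernelH3, hdiff, normSq_mk, normSq_apply]
  ring

theorem poissonKernelH3_zero_zero_one (z : ℂ) : poissonKernelH3 0 0 1 z = 1 := by
  have h : normSq z + 1 ≠ 0 := by linarith [normSq_nonneg z]
  simp [poissonKernelH3, add_comm 1 (normSq z), h]

theorem hasDerivAt_poissonKernelH3_neg_zero_one (z : ℂ) :
    HasDerivAt (fun ε : ℝ => poissonKernelH3 (-ε) 0 1 z) (-2 * z.re / (1 + normSq z)) 0 := by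
  have h := hasDerivAt_div_add_sq_add z.re (z.im ^ 2 + 1) (by positivity)
  simp_rw [poissonKernelH3_neg_zero_one]
  convert h using 2
  rw [normSq_apply]
  ring

theorem hasDerivAt_poissonKernelH3_zero_neg_one (z : ℂ) :
    HasDerivAt (fun ε : ℝ => poissonKernelH3 0 (-ε) 1 z) (-2 * z.im / (1 + normSq z)) 0 := by
  have h := hasDerivAt_div_add_sq_add z.im (z.re ^ 2 + 1) (by positivity)
  simp_rw [poissonKernelH3_zero_neg_one]
  convert h using 2
  rw [normSq_apply]
  ring

theorem poissonKernelH3_rpow_jump_deriv (δ : ℝ) (z : ℂ) :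
    ((deriv (fun ε : ℝ => poissonKernelH3 (-ε) 0 1 z ^ δ) 0 : ℝ) : ℂ)
      + I * ((deriv (fun ε : ℝ => poissonKernelH3 0 (-ε) 1 z ^ δ) 0 : ℝ) : ℂ)
      = -2 * δ * z / (1 + normSq z) := by
  have hre := (hasDerivAt_poissonKernelH3_neg_zero_one z).rpow_const_of_eq_one δ
    (by simp [poissonKernelH3_zero_zero_one])
  have him := (hasDerivAt_poissonKernelH3_zero_neg_one z).rpow_const_of_eq_one δ
    (by simp [poissonKernelH3_zero_zero_one])
  rw [hre.deriv, him.deriv]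
  have hN : 1 + normSq z ≠ 0 := by linarith [normSq_nonneg z]
  generalize normSq z = N at hN ⊢
  have hN' : (1 + N : ℂ) ≠ 0 := by exact_mod_cast hN
  conv_rhs => rw [← re_add_im z]
  push_cast
  field_simp
  ring

/-- `J⁺` is modelled by its real and imaginary parts, the flows `ε ↦ (-ε, 0, 1)` and
`ε ↦ (0, -ε, 1)` through `j`. -/
theorem poisson_jump_derivative_general (δ : ℝ) (φ θ : ℝ) :
    let z : ℂ := Complex.exp (Complex.I * φ) * Real.tan (θ / 2)
    ((deriv (fun ε : ℝ => poissonKernelH3 (-ε) 0 1 z ^ δ) 0 : ℝ) : ℂ)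
      + Complex.I * ((deriv (fun ε : ℝ => poissonKernelH3 0 (-ε) 1 z ^ δ) 0 : ℝ) : ℂ)
      = -δ * Real.sin θ * Complex.exp (Complex.I * φ) := by
  intro z
  have hnormSq : normSq z = Real.tan (θ / 2) ^ 2 := by
    rw [normSq_mul, normSq_ofReal, normSq_eq_norm_sq, norm_exp_I_mul_ofReal]
    ring
  rw [poissonKernelH3_rpow_jump_deriv, hnormSq,
    Real.sin_eq_two_mul_tan_half_div_one_add_tan_half_sq]
  simp only [z]
  generalize Real.tan (θ / 2) = t
  have hpos : (1 + t ^ 2 : ℂ) ≠ 0 := by exact_mod_cast (by positivity : 0 < 1 + t ^ 2).ne'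
  push_cast
  field_simp

/-- Derivative of `P^δ` at the base point `j = (0,0,1)` along the (complexified)
jumping direction `J⁺`, whose real and imaginary parts are the flows
`ε ↦ (-ε, 0, 1)` and `ε ↦ (0, -ε, 1)`: at the boundary point
`z = e^{iφ} tan(θ/2)` one gets `-δ sin θ e^{iφ}`. -/
theorem poisson_jump_derivative (δ : ℝ) (hδ : 0 < δ) (φ θ : ℝ) :
    let z : ℂ := Complex.exp (Complex.I * φ) * Real.tan (θ / 2)
    ((deriv (fun ε : ℝ => poissonKernelH3 (-ε) 0 1 z ^ δ) 0 : ℝ) : ℂ)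
      + Complex.I * ((deriv (fun ε : ℝ => poissonKernelH3 0 (-ε) 1 z ^ δ) 0 : ℝ) : ℂ)
      = -δ * Real.sin θ * Complex.exp (Complex.I * φ) :=
  poisson_jump_derivative_general δ φ θ
end
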